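/- arXiv:1412.0786 — 7 statements merged into one kernel-verified Lean document; each statement's English description precedes it below -/
import Mathlib

section
/- Let (A₁,B₁) and (A₂,B₂) be regular matrix pairs of n×n complex matrices (i.e., det(A_i − λB_i) ≢ 0). If the spectra σ(A₁,B₁) and σ(−A₂,B₂) (as generalized eigenvalue spectra, including infinite eigenvalues) are disjoint, then the only solution X ∈ ℂ^{n×n} of the equation A₂XB₁ + B₂XA₁ = 0 is X = 0. -/
/-!
Pick `λ` outside the finitely many finite eigenvalues of both pairs, so that `M₁ = A₁ - λ B₁` and
`M₂ = -A₂ - λ B₂` are invertible. The equation becomes `M₂ X B₁ = B₂ X M₁`, i.e. `Y = M₂ X`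
satisfies `Q Y = Y P` with `P = B₁ M₁⁻¹` and `Q = B₂ M₂⁻¹`. The Möbius map `∞ ↦ 0`,
`μ ↦ (μ - λ)⁻¹` carries `σ(A₁,B₁)` onto `σ(P)` and `σ(-A₂,B₂)` onto `σ(Q)`, injectively, so
`P` and `Q` have disjoint spectra. Sylvester's argument then gives `Y = 0`: with `χ` the
characteristic polynomial of `P`, `χ(Q) Y = Y χ(P) = 0`, and `χ(Q)` is invertible by the spectral
mapping theorem.
-/

open Matrix

/-- The generalized spectrum of a matrix pair `(A, B)`: finite eigenvalues `some λ` with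
`det (A - λ B) = 0`, and the infinite eigenvalue `none` when `B` is singular. -/
def genSpec {m : ℕ} (A B : Matrix (Fin m) (Fin m) ℂ) : Set (Option ℂ) :=
  {x | match x with
    | some lam => (A - lam • B).det = 0
    | none => ¬ IsUnit B.det}

/-- A matrix pair `(A, B)` is regular if `det (A - λ B) ≠ 0` for some `λ ∈ ℂ`. -/
def IsRegularPair {m : ℕ} (A B : Matrix (Fin m) (Fin m) ℂ) : Prop :=
  ∃ lam : ℂ, (A - lam • B).det ≠ 0

open Polynomial in
theorem Polynomial.aeval_mul_eq_mul_aeval_of_mul_eq_mul {R A : Type*} [CommSemiring R]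
    [Semiring A] [Algebra R A] {a b y : A} (h : b * y = y * a) (p : R[X]) :
    aeval b p * y = y * aeval a p := by
  induction p using Polynomial.induction_on with
  | C r => simp only [aeval_C, Algebra.commutes]
  | add p q hp hq => rw [map_add, map_add, add_mul, mul_add, hp, hq]
  | monomial k r ih =>
    simp only [pow_succ, ← mul_assoc, map_mul (aeval _), aeval_X] at ih ⊢
    rw [mul_assoc _ b, h, ← mul_assoc, ih, mul_assoc, mul_assoc]

open Polynomial in
theorem Matrix.eq_zero_of_mul_eq_mul_of_disjoint_spectrum {K ι : Type*} [Field K] [IsAlgClosed K]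
    [Fintype ι] [DecidableEq ι] {P Q Y : Matrix ι ι K}
    (hPQ : Disjoint (spectrum K P) (spectrum K Q)) (h : Q * Y = Y * P) : Y = 0 := by
  cases isEmpty_or_nonempty ι
  · exact Subsingleton.elim _ _
  have hunit : IsUnit (aeval Q P.charpoly) := by
    rw [← spectrum.zero_notMem_iff K, spectrum.map_polynomial_aeval_of_degree_pos _ _
      (by simp [charpoly_degree_eq_dim, Fintype.card_pos])]
    rintro ⟨r, hrQ, hr⟩
    exact hPQ.ne_of_mem (mem_spectrum_iff_isRoot_charpoly.2 hr) hrQ rfl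
  have hY := aeval_mul_eq_mul_aeval_of_mul_eq_mul h P.charpoly
  rwa [aeval_self_charpoly, mul_zero, hunit.mul_right_eq_zero] at hY

open Polynomial in
theorem Matrix.eval_det_map_C_sub_X_smul {R ι : Type*} [CommRing R] [Fintype ι] [DecidableEq ι]
    (A B : Matrix ι ι R) (r : R) :
    (A.map C - (X : R[X]) • B.map C).det.eval r = (A - r • B).det := by
  rw [← coe_evalRingHom, RingHom.map_det]
  congr 1
  ext i j
  simp [mul_comm (B i j)]

open Polynomial in
theorem IsRegularPair.finite_setOf_det_eq_zero {m : ℕ} {A B : Matrix (Fin m) (Fin m) ℂ}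
    (h : IsRegularPair A B) : {lam : ℂ | (A - lam • B).det = 0}.Finite := by
  obtain ⟨lam, hlam⟩ := h
  have hp : (A.map C - (X : ℂ[X]) • B.map C).det ≠ 0 := fun hp ↦
    hlam (by rw [← eval_det_map_C_sub_X_smul, hp, eval_zero])
  simpa only [IsRoot, eval_det_map_C_sub_X_smul] using finite_setOfPred_isRoot hp

theorem IsRegularPair.neg {m : ℕ} {A B : Matrix (Fin m) (Fin m) ℂ} (h : IsRegularPair A B) :
    IsRegularPair (-A) B := by
  obtain ⟨lam, hlam⟩ := h
  refine ⟨-lam, ?_⟩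
  rw [show -A - -lam • B = -(A - lam • B) by module, det_neg]
  exact mul_ne_zero (pow_ne_zero _ (neg_ne_zero.2 one_ne_zero)) hlam

theorem Matrix.mem_spectrum_mul_inv_iff {K ι : Type*} [Field K] [Fintype ι] [DecidableEq ι]
    {B M : Matrix ι ι K} (hM : IsUnit M.det) {r : K} :
    r ∈ spectrum K (B * M⁻¹) ↔ (r • M - B).det = 0 := by
  rw [spectrum.mem_iff, isUnit_iff_isUnit_det, Algebra.algebraMap_eq_smul_one,
    ← mul_nonsing_inv _ hM, ← smul_mul_assoc, ← sub_mul, det_mul, isUnit_iff_ne_zero, not_not,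
    mul_eq_zero, or_iff_left (isUnit_nonsing_inv_det _ hM).ne_zero]

theorem det_smul_sub_eq_zero_iff_mem_genSpec {m : ℕ} {A B : Matrix (Fin m) (Fin m) ℂ} {lam r : ℂ} :
    (r • (A - lam • B) - B).det = 0 ↔
      r = 0 ∧ none ∈ genSpec A B ∨ r ≠ 0 ∧ some (lam + r⁻¹) ∈ genSpec A B := by
  rcases eq_or_ne r 0 with rfl | hr
  · simp [genSpec, det_neg]
  · have : r • (A - lam • B) - B = r • (A - (lam + r⁻¹) • B) := by
      rw [add_smul, ← sub_sub, smul_sub _ (A - lam • B), smul_smul, mul_inv_cancel₀ hr, one_smul]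
    simp [genSpec, hr, this]

theorem disjoint_spectrum_mul_inv_of_disjoint_genSpec {m : ℕ}
    {A₁ B₁ A₂ B₂ : Matrix (Fin m) (Fin m) ℂ} {lam : ℂ}
    (hM₁ : IsUnit (A₁ - lam • B₁).det) (hM₂ : IsUnit (A₂ - lam • B₂).det)
    (hdisj : Disjoint (genSpec A₁ B₁) (genSpec A₂ B₂)) :
    Disjoint (spectrum ℂ (B₁ * (A₁ - lam • B₁)⁻¹)) (spectrum ℂ (B₂ * (A₂ - lam • B₂)⁻¹)) := by
  rw [Set.disjoint_left]
  intro r hr₁ hr₂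
  rw [mem_spectrum_mul_inv_iff hM₁, det_smul_sub_eq_zero_iff_mem_genSpec] at hr₁
  rw [mem_spectrum_mul_inv_iff hM₂, det_smul_sub_eq_zero_iff_mem_genSpec] at hr₂
  rcases hr₁ with ⟨hr, h₁⟩ | ⟨hr, h₁⟩
  · exact hdisj.ne_of_mem h₁ (hr₂.resolve_right (fun h ↦ h.1 hr)).2 rfl
  · exact hdisj.ne_of_mem h₁ (hr₂.resolve_left (fun h ↦ hr h.1)).2 rfl

/-- If `(A₁,B₁)` and `(A₂,B₂)` are regular pairs with
`σ(A₁,B₁) ∩ σ(−A₂,B₂) = ∅`, then `A₂ X B₁ + B₂ X A₁ = 0` has only the trivial solution. -/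
theorem trivial_solution_of_disjoint_spectra {n : ℕ}
    (A₁ B₁ A₂ B₂ : Matrix (Fin n) (Fin n) ℂ)
    (h₁ : IsRegularPair A₁ B₁) (h₂ : IsRegularPair A₂ B₂)
    (hdisj : Disjoint (genSpec A₁ B₁) (genSpec (-A₂) B₂))
    (X : Matrix (Fin n) (Fin n) ℂ)
    (hX : A₂ * X * B₁ + B₂ * X * A₁ = 0) :
    X = 0 := by
  obtain ⟨lam, hlam⟩ :=
    (h₁.finite_setOf_det_eq_zero.union h₂.neg.finite_setOf_det_eq_zero).exists_notMem
  simp only [Set.mem_union, Set.mem_ofPred_eq, not_or, ← isUnit_iff_ne_zero] at hlam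
  obtain ⟨hM₁, hM₂⟩ := hlam
  set M₁ := A₁ - lam • B₁
  set M₂ := -A₂ - lam • B₂
  have hM : M₂ * X * B₁ = B₂ * X * M₁ := by
    rw [← sub_eq_zero, ← neg_eq_zero, ← hX]
    simp only [M₁, M₂, sub_mul, mul_sub, neg_mul, smul_mul, mul_smul_comm]
    abel
  have hY : (B₂ * M₂⁻¹) * (M₂ * X) = (M₂ * X) * (B₁ * M₁⁻¹) := by
    rw [mul_assoc, nonsing_inv_mul_cancel_left _ _ hM₂, ← mul_assoc, hM,
      mul_nonsing_inv_cancel_right _ _ hM₁]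
  have hM₂X := eq_zero_of_mul_eq_mul_of_disjoint_spectrum
    (disjoint_spectrum_mul_inv_of_disjoint_genSpec hM₁ hM₂ hdisj) hY
  exact ((isUnit_iff_isUnit_det _).2 hM₂).mul_right_eq_zero.1 hM₂X
end

section
/- Let (M,L) be a regular symplectic pair of 2n×2n complex matrices, i.e., M J M^H = L J L^H with J = [[0, I_n],[−I_n, 0]]. Suppose U₁ ∈ ℂ^{2n×r₁}, U₂ ∈ ℂ^{2n×r₂} have full column rank, (R₁,T₁) and (R₂,T₂) are regular pairs, M U₁ T₁ = L U₁ R₁ and M U₂ T₂ = L U₂ R₂. If σ(R₁,T₁) ∩ σ(T₂^H, R₂^H) = ∅, then U₂^H J U₁ = 0. -/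
open Matrix

/-- The matrix `J = [[0, Iₙ], [−Iₙ, 0]]`. -/
def Jmat (n : ℕ) : Matrix (Fin n ⊕ Fin n) (Fin n ⊕ Fin n) ℂ :=
  Matrix.fromBlocks 0 1 (-1) 0

/-!
For real `c` avoiding finitely many values, the Cayley-type transform `(M - c L, c M - L)` is
again a symplectic pair, now with both matrices invertible, so `W = (A J Aᴴ)⁻¹` satisfies
`Aᴴ W A = J⁻¹ = Bᴴ W B`. Pushing the deflating relations `A U (T - c R) = B U (c T - R)` through
this congruence gives the generalized Sylvester equation `T₂ᴴ X T₁ = R₂ᴴ X R₁` for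
`X = U₂ᴴ J U₁`. Shifting both pencils by a common regular point `α` turns it into an ordinary
Sylvester equation `(W₂⁻¹ R₂ᴴ) (X W₁) = (X W₁) (W₁⁻¹ T₁)` whose coefficients have disjoint
spectra, since an eigenvalue `μ` corresponds to the generalized eigenvalue `α + μ⁻¹`. Its only
solution is `0`: apply the characteristic polynomial of one coefficient to the other, which is
invertible by the spectral mapping theorem.
-/

open Polynomial

namespace Matrix

section Sylvester

variable {R K m n : Type*} [Fintype m] [DecidableEq m] [Fintype n] [DecidableEq n]

theorem aeval_mul_eq_mul_aeval [CommRing R] {A : Matrix m m R} {B : Matrix n n R}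
    {Y : Matrix m n R} (h : A * Y = Y * B) (p : R[X]) : aeval A p * Y = Y * aeval B p := by
  induction p using Polynomial.induction_on' with
  | add p q hp hq => simp only [map_add, Matrix.add_mul, Matrix.mul_add, hp, hq]
  | monomial k c =>
    have hpow : A ^ k * Y = Y * B ^ k := by
      induction k with
      | zero => simp
      | succ k ih => rw [pow_succ, pow_succ, Matrix.mul_assoc, h, ← Matrix.mul_assoc, ih,
          Matrix.mul_assoc]
    simp only [aeval_monomial, Algebra.algebraMap_eq_smul_one, Matrix.smul_mul,
      Matrix.mul_smul, Matrix.one_mul, hpow]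

theorem eq_zero_of_mul_eq_mul_of_disjoint_spectrum_s2 [Field K] [IsAlgClosed K]
    {A : Matrix m m K} {B : Matrix n n K} {Y : Matrix m n K}
    (hAB : Disjoint (spectrum K A) (spectrum K B)) (h : A * Y = Y * B) : Y = 0 := by
  rcases isEmpty_or_nonempty m with hm | hm
  · exact Subsingleton.elim _ _
  have hunit : IsUnit (aeval B A.charpoly) := by
    rw [← spectrum.zero_notMem_iff K, spectrum.map_polynomial_aeval_of_degree_pos _ _
      (by rw [charpoly_degree_eq_dim]; exact_mod_cast Fintype.card_pos)]
    rintro ⟨μ, hμB, hμA⟩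
    exact hAB.ne_of_mem (mem_spectrum_iff_isRoot_charpoly.mpr hμA) hμB rfl
  have hY : Y * aeval B A.charpoly = 0 := by
    rw [← aeval_mul_eq_mul_aeval h, aeval_self_charpoly, Matrix.zero_mul]
  have hdet := (isUnit_iff_isUnit_det _).mp hunit
  calc Y = Y * aeval B A.charpoly * (aeval B A.charpoly)⁻¹ := by
        rw [Matrix.mul_nonsing_inv_cancel_right _ _ hdet]
    _ = 0 := by rw [hY, Matrix.zero_mul]

end Sylvester

theorem finite_setOf_det_sub_smul_eq_zero {R n : Type*} [CommRing R] [IsDomain R] [Fintype n]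
    [DecidableEq n] {A B : Matrix n n R} {z₀ : R} (h : (A - z₀ • B).det ≠ 0) :
    {z : R | (A - z • B).det = 0}.Finite := by
  have eval_det (z : R) : (det (A.map C - (X : R[X]) • B.map C)).eval z = (A - z • B).det := by
    rw [← coe_evalRingHom, RingHom.map_det]
    congr 1
    ext i j
    simp only [RingHom.mapMatrix_apply, coe_evalRingHom, map_apply, sub_apply, smul_apply,
      smul_eq_mul, eval_sub, eval_C, eval_mul, eval_X]
  have hp : det (A.map C - (X : R[X]) • B.map C) ≠ 0 := fun h0 =>
    h (by rw [← eval_det, h0, eval_zero])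
  simpa only [IsRoot.def, eval_det] using Polynomial.finite_setOfPred_isRoot hp

section Congruence

variable {R N p₁ p₂ : Type*} [CommRing R] [StarRing R] [Fintype N] [DecidableEq N]

theorem conjTranspose_mul_inv_mul_mul_conjTranspose {B : Matrix N N R} (K : Matrix N N R)
    (hB : IsUnit B.det) : Bᴴ * (B * K * Bᴴ)⁻¹ * B = K⁻¹ := by
  have hBH : IsUnit Bᴴ.det := by rw [det_conjTranspose]; exact hB.star
  rw [Matrix.mul_inv_rev, Matrix.mul_inv_rev, Matrix.mul_assoc, Matrix.mul_assoc,
    mul_nonsing_inv_cancel_left _ _ hBH, nonsing_inv_mul_cancel_right _ _ hB]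

theorem isUnit_det_of_mul_mul_conjTranspose_eq {A B K : Matrix N N R} (hA : IsUnit A.det)
    (hK : IsUnit K.det) (h : A * K * Aᴴ = B * K * Bᴴ) : IsUnit B.det := by
  have hdet : A.det * K.det * star A.det = B.det * K.det * star B.det := by
    simpa only [det_mul, det_conjTranspose] using congrArg det h
  have hprod : IsUnit (B.det * K.det * star B.det) := hdet ▸ (hA.mul hK).mul hA.star
  exact isUnit_of_mul_isUnit_left (isUnit_of_mul_isUnit_left hprod)

theorem conjTranspose_mul_inv_mul_eq_of_mul_mul_conjTranspose_eq {A B K : Matrix N N R}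
    {Y₁ Z₁ : Matrix N p₁ R} {Y₂ Z₂ : Matrix N p₂ R} (hA : IsUnit A.det) (hK : IsUnit K.det)
    (h : A * K * Aᴴ = B * K * Bᴴ) (h₁ : A * Y₁ = B * Z₁) (h₂ : A * Y₂ = B * Z₂) :
    Y₂ᴴ * K⁻¹ * Y₁ = Z₂ᴴ * K⁻¹ * Z₁ := by
  have hB := isUnit_det_of_mul_mul_conjTranspose_eq hA hK h
  calc Y₂ᴴ * K⁻¹ * Y₁ = (A * Y₂)ᴴ * (A * K * Aᴴ)⁻¹ * (A * Y₁) := by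
        rw [← conjTranspose_mul_inv_mul_mul_conjTranspose K hA]
        simp only [conjTranspose_mul, Matrix.mul_assoc]
    _ = (B * Z₂)ᴴ * (B * K * Bᴴ)⁻¹ * (B * Z₁) := by rw [h, h₁, h₂]
    _ = Z₂ᴴ * K⁻¹ * Z₁ := by
        rw [← conjTranspose_mul_inv_mul_mul_conjTranspose K hB]
        simp only [conjTranspose_mul, Matrix.mul_assoc]

end Congruence

section Cayley

variable {R N p : Type*} [CommRing R] [Fintype N] [Fintype p] {M L : Matrix N N R} {c : R}

theorem sub_smul_mul_mul_conjTranspose_eq [StarRing R] (hc : star c = c) {K : Matrix N N R}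
    (h : M * K * Mᴴ = L * K * Lᴴ) :
    (M - c • L) * K * (M - c • L)ᴴ = (c • M - L) * K * (c • M - L)ᴴ := by
  simp only [conjTranspose_sub, conjTranspose_smul, hc, Matrix.sub_mul, Matrix.mul_sub,
    Matrix.smul_mul, Matrix.mul_smul, h]
  module

theorem sub_smul_mul_mul_sub_smul_eq {U : Matrix N p R} {T S : Matrix p p R}
    (h : M * U * T = L * U * S) :
    (M - c • L) * (U * (T - c • S)) = (c • M - L) * (U * (c • T - S)) := by
  simp only [← Matrix.mul_assoc, Matrix.sub_mul, Matrix.mul_sub, Matrix.smul_mul,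
    Matrix.mul_smul, h]
  module

end Cayley

theorem conjTranspose_mul_mul_eq_of_symplectic {N p₁ p₂ : Type*} [Fintype N] [DecidableEq N]
    [Fintype p₁] [Fintype p₂] {M L K : Matrix N N ℂ} {U₁ : Matrix N p₁ ℂ} {U₂ : Matrix N p₂ ℂ}
    {R₁ T₁ : Matrix p₁ p₁ ℂ} {R₂ T₂ : Matrix p₂ p₂ ℂ}
    (hreg : ∃ lam : ℂ, (M - lam • L).det ≠ 0) (hK : IsUnit K.det)
    (hsymp : M * K * Mᴴ = L * K * Lᴴ)
    (h₁ : M * U₁ * T₁ = L * U₁ * R₁) (h₂ : M * U₂ * T₂ = L * U₂ * R₂) :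
    T₂ᴴ * (U₂ᴴ * K⁻¹ * U₁) * T₁ = R₂ᴴ * (U₂ᴴ * K⁻¹ * U₁) * R₁ := by
  obtain ⟨lam, hlam⟩ := hreg
  -- for real `c`, `(M - c L, c M - L)` is again a symplectic pair
  obtain ⟨_, ⟨c, rfl⟩, hc⟩ :=
    (Set.infinite_range_of_injective Complex.ofReal_injective).exists_notMem_finite
      ((finite_setOf_det_sub_smul_eq_zero hlam).union (Set.toFinite {1, -1}))
  simp only [Set.mem_union, Set.mem_ofPred_eq, Set.mem_insert_iff, Set.mem_singleton_iff,
    not_or] at hc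
  obtain ⟨hdet, hc₁, hc₂⟩ := hc
  have hstar : star (c : ℂ) = c := Complex.conj_ofReal c
  have key := conjTranspose_mul_inv_mul_eq_of_mul_mul_conjTranspose_eq (isUnit_iff_ne_zero.mpr hdet)
    hK (sub_smul_mul_mul_conjTranspose_eq hstar hsymp) (sub_smul_mul_mul_sub_smul_eq h₁)
    (sub_smul_mul_mul_sub_smul_eq h₂)
  set X := U₂ᴴ * K⁻¹ * U₁
  have hscaled : (1 - (c : ℂ) ^ 2) • (T₂ᴴ * X * T₁ - R₂ᴴ * X * R₁) = 0 := by
    rw [← sub_eq_zero] at key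
    convert key using 1
    simp only [X, conjTranspose_mul, conjTranspose_sub, conjTranspose_smul, hstar,
      Matrix.sub_mul, Matrix.mul_sub, Matrix.smul_mul, Matrix.mul_smul, Matrix.mul_assoc]
    module
  have hc : (1 - (c : ℂ) ^ 2) ≠ 0 := by
    rw [show (1 - (c : ℂ) ^ 2) = (1 - c) * (1 + c) by ring]
    exact mul_ne_zero (sub_ne_zero.mpr (Ne.symm hc₁)) fun h => hc₂ (by linear_combination h)
  exact sub_eq_zero.mp ((smul_eq_zero.mp hscaled).resolve_left hc)

end Matrix

namespace IsRegularPair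

variable {m : ℕ} {A B : Matrix (Fin m) (Fin m) ℂ}

theorem finite_setOf_det_sub_smul_eq_zero (h : IsRegularPair A B) :
    {z : ℂ | (A - z • B).det = 0}.Finite :=
  h.elim fun _ hz => Matrix.finite_setOf_det_sub_smul_eq_zero hz

theorem conjTranspose (h : IsRegularPair A B) : IsRegularPair Aᴴ Bᴴ := by
  obtain ⟨z, hz⟩ := h
  refine ⟨star z, fun h0 => hz ?_⟩
  rw [← conjTranspose_smul, ← conjTranspose_sub, det_conjTranspose, star_eq_zero] at h0
  exact h0

theorem swap (h : IsRegularPair A B) : IsRegularPair B A := by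
  obtain ⟨z, hz, hz0⟩ := Set.infinite_univ.exists_notMem_finite
    (h.finite_setOf_det_sub_smul_eq_zero.union (Set.finite_singleton 0))
  simp only [Set.mem_union, Set.mem_ofPred_eq, Set.mem_singleton_iff, not_or] at hz0
  refine ⟨z⁻¹, ?_⟩
  have e : B - z⁻¹ • A = (-z⁻¹) • (A - z • B) := by
    rw [smul_sub, smul_smul, neg_mul, inv_mul_cancel₀ hz0.2]; module
  rw [e, det_smul]
  exact mul_ne_zero (pow_ne_zero _ (by simpa using hz0.2)) hz0.1

theorem exists_common_det_sub_smul_ne_zero {r : ℕ} {A' B' : Matrix (Fin r) (Fin r) ℂ}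
    (h : IsRegularPair A B) (h' : IsRegularPair A' B') :
    ∃ α : ℂ, (A - α • B).det ≠ 0 ∧ (A' - α • B').det ≠ 0 := by
  obtain ⟨α, -, hα⟩ := Set.infinite_univ.exists_notMem_finite
    (h.finite_setOf_det_sub_smul_eq_zero.union h'.finite_setOf_det_sub_smul_eq_zero)
  simp only [Set.mem_union, Set.mem_ofPred_eq, not_or] at hα
  exact ⟨α, hα⟩

end IsRegularPair

/-- The eigenvalue `μ` of `(A - α B)⁻¹ B` corresponds to the generalized eigenvalue `α + μ⁻¹`
of `(A, B)`, infinite for `μ = 0`. -/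
noncomputable def shiftedInv (α μ : ℂ) : Option ℂ := if μ = 0 then none else some (α + μ⁻¹)

theorem spectrum_inv_mul_subset_preimage_genSpec {m : ℕ} {A B : Matrix (Fin m) (Fin m) ℂ}
    {α : ℂ} (hα : (A - α • B).det ≠ 0) :
    spectrum ℂ ((A - α • B)⁻¹ * B) ⊆ shiftedInv α ⁻¹' genSpec A B := by
  intro μ hμ
  have hpencil : (μ • A - (μ * α + 1) • B).det = 0 := by
    rw [spectrum.mem_iff, Algebra.algebraMap_eq_smul_one, isUnit_iff_isUnit_det,
      isUnit_iff_ne_zero, not_not] at hμ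
    have e : (A - α • B) * (μ • 1 - (A - α • B)⁻¹ * B) = μ • A - (μ * α + 1) • B := by
      rw [Matrix.mul_sub, ← Matrix.mul_assoc, mul_nonsing_inv _ (isUnit_iff_ne_zero.mpr hα),
        Matrix.one_mul, Matrix.mul_smul, Matrix.mul_one]
      module
    rw [← e, det_mul, hμ, mul_zero]
  simp only [Set.mem_preimage, shiftedInv]
  split_ifs with hμ0
  · subst hμ0
    simpa [genSpec, det_neg] using hpencil
  · show (A - (α + μ⁻¹) • B).det = 0
    have e : A - (α + μ⁻¹) • B = μ⁻¹ • (μ • A - (μ * α + 1) • B) := by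
      match_scalars <;> field_simp
    rw [e, det_smul, hpencil, mul_zero]

theorem eq_zero_of_mul_mul_eq_of_disjoint_genSpec {r₁ r₂ : ℕ}
    {A₁ B₁ : Matrix (Fin r₁) (Fin r₁) ℂ} {A₂ B₂ : Matrix (Fin r₂) (Fin r₂) ℂ}
    {X : Matrix (Fin r₂) (Fin r₁) ℂ} (h₁ : IsRegularPair A₁ B₁) (h₂ : IsRegularPair A₂ B₂)
    (hdisj : Disjoint (genSpec A₁ B₁) (genSpec A₂ B₂)) (hX : A₂ * X * B₁ = B₂ * X * A₁) :
    X = 0 := by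
  obtain ⟨α, hα₁, hα₂⟩ := h₁.exists_common_det_sub_smul_ne_zero h₂
  set W₁ := A₁ - α • B₁
  set W₂ := A₂ - α • B₂
  have hW₁ : IsUnit W₁.det := isUnit_iff_ne_zero.mpr hα₁
  have hW₂ : IsUnit W₂.det := isUnit_iff_ne_zero.mpr hα₂
  have hshift : W₂ * X * B₁ = B₂ * X * W₁ := by
    simp only [W₁, W₂, Matrix.sub_mul, Matrix.mul_sub, Matrix.smul_mul, Matrix.mul_smul, hX]
  have hsylvester : (W₂⁻¹ * B₂) * (X * W₁) = (X * W₁) * (W₁⁻¹ * B₁) := by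
    calc (W₂⁻¹ * B₂) * (X * W₁) = W₂⁻¹ * (W₂ * X * B₁) := by
          rw [hshift]; simp only [Matrix.mul_assoc]
      _ = X * W₁ * (W₁⁻¹ * B₁) := by
          rw [Matrix.mul_assoc, Matrix.mul_assoc, nonsing_inv_mul_cancel_left _ _ hW₂,
            mul_nonsing_inv_cancel_left _ _ hW₁]
  have hspec : Disjoint (spectrum ℂ (W₂⁻¹ * B₂)) (spectrum ℂ (W₁⁻¹ * B₁)) :=
    (hdisj.symm.preimage (shiftedInv α)).mono
      (spectrum_inv_mul_subset_preimage_genSpec hα₂) (spectrum_inv_mul_subset_preimage_genSpec hα₁)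
  calc X = X * W₁ * W₁⁻¹ := (mul_nonsing_inv_cancel_right _ _ hW₁).symm
    _ = 0 := by rw [eq_zero_of_mul_eq_mul_of_disjoint_spectrum_s2 hspec hsylvester, Matrix.zero_mul]

theorem Jmat_mul_self (n : ℕ) : Jmat n * Jmat n = -1 := by
  simp [Jmat, fromBlocks_multiply, ← fromBlocks_one, fromBlocks_neg]

theorem Jmat_inv (n : ℕ) : (Jmat n)⁻¹ = -Jmat n :=
  inv_eq_right_inv (by rw [mul_neg, Jmat_mul_self, neg_neg])

theorem isUnit_det_Jmat (n : ℕ) : IsUnit (Jmat n).det :=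
  isUnit_det_of_right_inverse (by rw [mul_neg, Jmat_mul_self, neg_neg])

theorem symplectic_pair_J_orthogonal_general {n r₁ r₂ : ℕ}
    (M L : Matrix (Fin n ⊕ Fin n) (Fin n ⊕ Fin n) ℂ)
    (hreg : ∃ lam : ℂ, (M - lam • L).det ≠ 0)
    (hsymp : M * Jmat n * Mᴴ = L * Jmat n * Lᴴ)
    (U₁ : Matrix (Fin n ⊕ Fin n) (Fin r₁) ℂ) (U₂ : Matrix (Fin n ⊕ Fin n) (Fin r₂) ℂ)
    (R₁ T₁ : Matrix (Fin r₁) (Fin r₁) ℂ) (R₂ T₂ : Matrix (Fin r₂) (Fin r₂) ℂ)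
    (hreg₁ : IsRegularPair R₁ T₁) (hreg₂ : IsRegularPair R₂ T₂)
    (heq₁ : M * U₁ * T₁ = L * U₁ * R₁) (heq₂ : M * U₂ * T₂ = L * U₂ * R₂)
    (hdisj : Disjoint (genSpec R₁ T₁) (genSpec T₂ᴴ R₂ᴴ)) :
    U₂ᴴ * Jmat n * U₁ = 0 := by
  have hpencil := conjTranspose_mul_mul_eq_of_symplectic hreg (isUnit_det_Jmat n) hsymp heq₁ heq₂
  have hzero := eq_zero_of_mul_mul_eq_of_disjoint_genSpec hreg₁ hreg₂.conjTranspose.swap hdisj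
    hpencil
  rwa [Jmat_inv, Matrix.mul_neg, Matrix.neg_mul, neg_eq_zero] at hzero

/-- Theorem 2.2 (ii): if `(M, L)` is a regular symplectic pair, `U₁, U₂` are of full column
rank with `M U₁ T₁ = L U₁ R₁`, `M U₂ T₂ = L U₂ R₂`, `(R₁,T₁)` and `(R₂,T₂)` regular pairs, and
`σ(R₁,T₁) ∩ σ(T₂ᴴ,R₂ᴴ) = ∅`, then `U₁` and `U₂` are `J`-orthogonal: `U₂ᴴ J U₁ = 0`. -/
theorem symplectic_pair_J_orthogonal {n r₁ r₂ : ℕ}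
    (M L : Matrix (Fin n ⊕ Fin n) (Fin n ⊕ Fin n) ℂ)
    (hreg : ∃ lam : ℂ, (M - lam • L).det ≠ 0)
    (hsymp : M * Jmat n * Mᴴ = L * Jmat n * Lᴴ)
    (U₁ : Matrix (Fin n ⊕ Fin n) (Fin r₁) ℂ) (U₂ : Matrix (Fin n ⊕ Fin n) (Fin r₂) ℂ)
    (hU₁ : U₁.rank = r₁) (hU₂ : U₂.rank = r₂)
    (R₁ T₁ : Matrix (Fin r₁) (Fin r₁) ℂ) (R₂ T₂ : Matrix (Fin r₂) (Fin r₂) ℂ)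
    (hreg₁ : IsRegularPair R₁ T₁) (hreg₂ : IsRegularPair R₂ T₂)
    (heq₁ : M * U₁ * T₁ = L * U₁ * R₁) (heq₂ : M * U₂ * T₂ = L * U₂ * R₂)
    (hdisj : Disjoint (genSpec R₁ T₁) (genSpec T₂ᴴ R₂ᴴ)) :
    U₂ᴴ * Jmat n * U₁ = 0 :=
  symplectic_pair_J_orthogonal_general M L hreg hsymp U₁ U₂ R₁ T₁ R₂ T₂ hreg₁ hreg₂ heq₁ heq₂ hdisj
end

section
/- Let (A,B) be a regular pair of n×n complex matrices, and let [C,D] ∈ ℂ^{n×2n} have full row rank with C A + D B = 0. Then the pair (D,C) is regular, i.e., det(D − λC) ≠ 0 for some λ ∈ ℂ. -/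
open Matrix

/-!
If `M = A - μ B` is invertible, then `C A + D B = 0` gives `C M = -(D + μ C) B`, so both `C` and
`D` are right multiples of `E = D + μ C`: with `N = B M⁻¹`, `[C, D] = E [-N, 1 + μ N]`.
Hence `rank E ≥ rank [C, D] = n`, so `E = D - (-μ) C` is invertible.
-/

namespace Matrix

theorem det_ne_zero_of_rank_eq_card {K m : Type*} [Field K] [Fintype m] [DecidableEq m]
    {E : Matrix m m K} (h : E.rank = Fintype.card m) : E.det ≠ 0 := by
  have hsurj : Function.Surjective E.mulVecLin := by
    rw [← LinearMap.range_eq_top]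
    apply Submodule.eq_top_of_finrank_eq
    rw [← rank, h, Module.finrank_fintype_fun_eq_card]
  exact (isUnit_iff_isUnit_det E).mp (mulVec_surjective_iff_isUnit.mp hsurj) |>.ne_zero

variable {R m n : Type*} [CommRing R] [Fintype n] [DecidableEq n]

theorem fromCols_eq_add_smul_mul {A B : Matrix n n R} {C D : Matrix m n R} {μ : R}
    (hM : IsUnit (A - μ • B).det) (hCD : C * A + D * B = 0) :
    fromCols C D = (D + μ • C) *
      fromCols (-(B * (A - μ • B)⁻¹)) (1 + μ • (B * (A - μ • B)⁻¹)) := by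
  set M := A - μ • B with hM_def
  set E := D + μ • C with hE_def
  have hCM : C * M = -(E * B) := by
    rw [hM_def, hE_def, Matrix.mul_sub, eq_neg_of_add_eq_zero_left hCD, Matrix.add_mul,
      Matrix.mul_smul, Matrix.smul_mul]
    abel
  have hC : C = -(E * (B * M⁻¹)) := by
    rw [← Matrix.mul_assoc, ← Matrix.neg_mul, ← hCM, Matrix.mul_assoc, mul_nonsing_inv M hM,
      Matrix.mul_one]
  have hD : D = E * (1 + μ • (B * M⁻¹)) := by
    rw [Matrix.mul_add, Matrix.mul_one, Matrix.mul_smul, neg_eq_iff_eq_neg.mp hC.symm, smul_neg,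
      hE_def, add_neg_cancel_right]
  rw [mul_fromCols, ← hD, Matrix.mul_neg, ← hC]

theorem rank_fromCols_le_rank_add_smul [StrongRankCondition R] {A B : Matrix n n R}
    {C D : Matrix m n R} {μ : R} (hM : IsUnit (A - μ • B).det) (hCD : C * A + D * B = 0) :
    (fromCols C D).rank ≤ (D + μ • C).rank :=
  fromCols_eq_add_smul_mul hM hCD ▸ rank_mul_le_left _ _

end Matrix

/-- Lemma 3.4: let `(A, B)` be a regular pair and `[C, D] ∈ ℂ^{n×2n}` of full row rank with
`C A + D B = 0`. Then the pair `(D, C)` is regular. -/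
theorem regular_of_left_annihilator {n : ℕ}
    (A B C D : Matrix (Fin n) (Fin n) ℂ)
    (hreg : ∃ lam : ℂ, (A - lam • B).det ≠ 0)
    (hrank : (Matrix.fromCols C D).rank = n)
    (hCD : C * A + D * B = 0) :
    ∃ lam : ℂ, (D - lam • C).det ≠ 0 := by
  obtain ⟨μ, hμ⟩ := hreg
  have hE : (D + μ • C).rank = n :=
    le_antisymm (rank_le_width _)
      (hrank.symm.le.trans (rank_fromCols_le_rank_add_smul hμ.isUnit hCD))
  refine ⟨-μ, ?_⟩
  rw [neg_smul, sub_neg_eq_add]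
  exact det_ne_zero_of_rank_eq_card (hE.trans (Fintype.card_fin n).symm)
end

section
/- Radon's Lemma, direction (i): Let A, S, D ∈ ℂ^{n×n} with S = S^H and D = D^H. Suppose W(t) solves the Riccati differential equation W'(t) = −W(t)SW(t) + W(t)A + A^H W(t) + D with W(0) = W₀ on an open interval containing 0, Q(t) solves Q'(t) = (S W(t) − A) Q(t), Q(0) = I, and set P(t) = W(t)Q(t). Then Y(t) = [Q(t); P(t)] solves the linear system Y'(t) = H̃ Y(t), Y(0) = [I; W₀], where H̃ = [[−A, S],[D, A^H]]. -/
open Matrix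

/-!
Differentiating `P = W Q` by the product rule and substituting the two differential equations, the
quadratic terms `W S W Q` cancel: `P' = W' Q + W Q' = D Q + Aᴴ W Q = D Q + Aᴴ P`. Likewise
`Q' = S W Q - A Q = -A Q + S P`. These are exactly the two block rows of `[[-A, S], [D, Aᴴ]] [Q; P]`.
-/

section EntrywiseDeriv

variable {𝕜 R : Type*} [NontriviallyNormedField 𝕜] [NormedRing R] [NormedAlgebra 𝕜 R]
  {l m p : Type*}

/-- Matrices carry no global norm instance, so derivatives of matrix-valued functions are taken
entrywise. -/
def HasEntrywiseDerivAt (F : 𝕜 → Matrix m p R) (F' : Matrix m p R) (t : 𝕜) : Prop :=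
  ∀ i j, HasDerivAt (fun s => F s i j) (F' i j) t

theorem HasEntrywiseDerivAt.congr_deriv {F : 𝕜 → Matrix m p R} {F₁' F₂' : Matrix m p R} {t : 𝕜}
    (hF : HasEntrywiseDerivAt F F₁' t) (h : F₁' = F₂') : HasEntrywiseDerivAt F F₂' t :=
  h ▸ hF

theorem HasEntrywiseDerivAt.mul [Fintype m] {F : 𝕜 → Matrix l m R} {G : 𝕜 → Matrix m p R}
    {F' : Matrix l m R} {G' : Matrix m p R} {t : 𝕜}
    (hF : HasEntrywiseDerivAt F F' t) (hG : HasEntrywiseDerivAt G G' t) :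
    HasEntrywiseDerivAt (fun s => F s * G s) (F' * G t + F t * G') t := by
  intro i j
  have hsum := HasDerivAt.fun_sum (u := Finset.univ) fun k _ => (hF i k).mul (hG k j)
  simpa only [mul_apply, Matrix.add_apply, Pi.mul_apply, Finset.sum_add_distrib] using hsum

theorem HasEntrywiseDerivAt.fromRows {l' : Type*} {F : 𝕜 → Matrix l p R}
    {G : 𝕜 → Matrix l' p R} {F' : Matrix l p R} {G' : Matrix l' p R} {t : 𝕜}
    (hF : HasEntrywiseDerivAt F F' t) (hG : HasEntrywiseDerivAt G G' t) :
    HasEntrywiseDerivAt (fun s => Matrix.fromRows (F s) (G s)) (Matrix.fromRows F' G') t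
  | .inl i, j => hF i j
  | .inr i, j => hG i j

end EntrywiseDeriv

section RiccatiAlgebra

variable {R : Type*} [Ring R] {n : Type*} [Fintype n] (A B S D W Q : Matrix n n R)

theorem riccati_derivative_Q_eq : (S * W - A) * Q = -A * Q + S * (W * Q) := by
  simp only [sub_mul, neg_mul, Matrix.mul_assoc]
  abel

theorem riccati_derivative_P_eq :
    (-(W * S * W) + W * A + B * W + D) * Q + W * ((S * W - A) * Q) = D * Q + B * (W * Q) := by
  simp only [add_mul, neg_mul, sub_mul, mul_sub, Matrix.mul_assoc]
  abel

end RiccatiAlgebra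

theorem radon_lemma_forward_general {n : ℕ}
    (A S D : Matrix (Fin n) (Fin n) ℂ)
    (U : Set ℝ)
    (W Q : ℝ → Matrix (Fin n) (Fin n) ℂ)
    (W₀ : Matrix (Fin n) (Fin n) ℂ)
    (hW : ∀ t ∈ U, ∀ i j, HasDerivAt (fun s => W s i j)
      ((-(W t * S * W t) + W t * A + Aᴴ * W t + D) i j) t)
    (hW0 : W 0 = W₀)
    (hQ : ∀ t ∈ U, ∀ i j, HasDerivAt (fun s => Q s i j)
      (((S * W t - A) * Q t) i j) t)
    (hQ0 : Q 0 = 1)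
    (P : ℝ → Matrix (Fin n) (Fin n) ℂ)
    (hP : ∀ t, P t = W t * Q t) :
    (∀ t ∈ U, ∀ i j, HasDerivAt (fun s => Matrix.fromRows (Q s) (P s) i j)
      ((Matrix.fromBlocks (-A) S D Aᴴ * Matrix.fromRows (Q t) (P t)) i j) t) ∧
    Matrix.fromRows (Q 0) (P 0) = Matrix.fromRows 1 W₀ := by
  refine ⟨fun t ht => ?_, by rw [hP, hQ0, hW0, mul_one]⟩
  obtain rfl : P = fun t => W t * Q t := funext hP
  have hQ' : HasEntrywiseDerivAt Q (-A * Q t + S * (W t * Q t)) t :=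
    HasEntrywiseDerivAt.congr_deriv (hQ t ht) (riccati_derivative_Q_eq A S (W t) (Q t))
  have hP' : HasEntrywiseDerivAt (fun s => W s * Q s) (D * Q t + Aᴴ * (W t * Q t)) t :=
    HasEntrywiseDerivAt.congr_deriv (HasEntrywiseDerivAt.mul (hW t ht) (hQ t ht))
      (riccati_derivative_P_eq A Aᴴ S D (W t) (Q t))
  rw [fromBlocks_mul_fromRows]
  exact hQ'.fromRows hP'

/-- Radon's Lemma, direction (i): if `W` solves the Riccati differential equation
`W' = −W S W + W A + Aᴴ W + D`, `W 0 = W₀`, and `Q` solves `Q' = (S W − A) Q`, `Q 0 = I`,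
then with `P := W Q`, the stacked function `Y = [Q; P]` solves the linear system
`Y' = H̃ Y`, `Y 0 = [I; W₀]`, where `H̃ = [[−A, S], [D, Aᴴ]]`.
Derivatives of matrix-valued functions are taken entrywise. -/
theorem radon_lemma_forward {n : ℕ}
    (A S D : Matrix (Fin n) (Fin n) ℂ)
    (hS : S.IsHermitian) (hD : D.IsHermitian)
    (U : Set ℝ) (hU : IsOpen U) (h0U : (0 : ℝ) ∈ U)
    (W Q : ℝ → Matrix (Fin n) (Fin n) ℂ)
    (W₀ : Matrix (Fin n) (Fin n) ℂ)
    (hW : ∀ t ∈ U, ∀ i j, HasDerivAt (fun s => W s i j)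
      ((-(W t * S * W t) + W t * A + Aᴴ * W t + D) i j) t)
    (hW0 : W 0 = W₀)
    (hQ : ∀ t ∈ U, ∀ i j, HasDerivAt (fun s => Q s i j)
      (((S * W t - A) * Q t) i j) t)
    (hQ0 : Q 0 = 1)
    (P : ℝ → Matrix (Fin n) (Fin n) ℂ)
    (hP : ∀ t, P t = W t * Q t) :
    (∀ t ∈ U, ∀ i j, HasDerivAt (fun s => Matrix.fromRows (Q s) (P s) i j)
      ((Matrix.fromBlocks (-A) S D Aᴴ * Matrix.fromRows (Q t) (P t)) i j) t) ∧
    Matrix.fromRows (Q 0) (P 0) = Matrix.fromRows 1 W₀ :=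
  radon_lemma_forward_general A S D U W Q W₀ hW hW0 hQ hQ0 P hP
end

section
/- Radon's Lemma, direction (ii): Let A, S, D ∈ ℂ^{n×n} with S = S^H, D = D^H, and let H̃ = [[−A, S],[D, A^H]]. Let Y(t) = [Q(t); P(t)] = exp(t H̃)·[I; W₀] where W₀ is Hermitian. If Q(t) is invertible for all t in an open interval I containing 0, then W(t) := P(t)Q(t)^{-1} solves on I the Riccati differential equation W'(t) = −W(t)SW(t) + W(t)A + A^H W(t) + D with W(0) = W₀. -/
/-!
Differentiating `[Q; P] = exp(t H̃) [I; W₀]` gives the linear system `Q' = -A Q + S P`,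
`P' = D Q + Aᴴ P`. Where `Q` is invertible, `(Q⁻¹)' = -Q⁻¹ Q' Q⁻¹`, and the product rule for
`W = P Q⁻¹` turns the linear system into the Riccati equation, using only `Q Q⁻¹ = 1`.
-/

open Matrix

theorem HasDerivAt.ringInverse {𝕜 R : Type*} [NontriviallyNormedField 𝕜] [NormedRing R]
    [HasSummableGeomSeries R] [NormedAlgebra 𝕜 R] {f : 𝕜 → R} {f' : R} {t : 𝕜}
    (hf : HasDerivAt f f' t) (ht : IsUnit (f t)) :
    HasDerivAt (fun s => Ring.inverse (f s))
      (-(Ring.inverse (f t) * f' * Ring.inverse (f t))) t := by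
  obtain ⟨u, hu⟩ := ht
  have := (hu ▸ hasFDerivAt_ringInverse (𝕜 := 𝕜) u).comp_hasDerivAt t hf
  simpa [← hu, Function.comp_def] using this

theorem HasDerivAt.mul_ringInverse_of_linear {𝕜 R : Type*} [NontriviallyNormedField 𝕜]
    [NormedRing R] [HasSummableGeomSeries R] [NormedAlgebra 𝕜 R] {Q P : 𝕜 → R} {a b c d : R}
    {t : 𝕜} (hQ : HasDerivAt Q (-a * Q t + b * P t) t) (hP : HasDerivAt P (c * Q t + d * P t) t)
    (ht : IsUnit (Q t)) :
    HasDerivAt (fun s => P s * Ring.inverse (Q s))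
      (-(P t * Ring.inverse (Q t) * b * (P t * Ring.inverse (Q t))) + P t * Ring.inverse (Q t) * a
        + d * (P t * Ring.inverse (Q t)) + c) t := by
  refine (hP.fun_mul (hQ.ringInverse ht)).congr_deriv ?_
  have hQQ : Q t * Ring.inverse (Q t) = 1 := Ring.mul_inverse_cancel _ ht
  generalize Ring.inverse (Q t) = Qi at hQQ ⊢
  simp only [add_mul, mul_add, neg_mul, mul_neg, mul_assoc, hQQ]
  noncomm_ring

namespace Matrix

/- The statements below only involve the product topology of `Matrix`; the `l∞` operator norm
induces that topology and is submultiplicative, so it serves for all the proofs. -/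
attribute [local instance] Matrix.linftyOpNormedAddCommGroup Matrix.linftyOpNormedSpace
  Matrix.linftyOpNormedRing Matrix.linftyOpNormedAlgebra

variable {l m n 𝕜 K : Type*} [Fintype l] [Fintype m] [Fintype n]

theorem hasDerivAt_iff_forall_apply {E : Type*} [NontriviallyNormedField 𝕜]
    [NormedAddCommGroup E] [NormedSpace 𝕜 E] {f : 𝕜 → Matrix m n E} {f' : Matrix m n E} {t : 𝕜} :
    HasDerivAt f f' t ↔ ∀ i j, HasDerivAt (fun s => f s i j) (f' i j) t := by
  exact hasDerivAt_iff_tendsto_slope.trans <| tendsto_pi_nhds.trans <| forall_congr' fun _ =>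
    tendsto_pi_nhds.trans <| forall_congr' fun _ => hasDerivAt_iff_tendsto_slope.symm

theorem hasDerivAt_fromRows_iff {E : Type*} [NontriviallyNormedField 𝕜]
    [NormedAddCommGroup E] [NormedSpace 𝕜 E] {f : 𝕜 → Matrix l n E} {g : 𝕜 → Matrix m n E}
    {f' : Matrix l n E} {g' : Matrix m n E} {t : 𝕜} :
    HasDerivAt (fun s => fromRows (f s) (g s)) (fromRows f' g') t ↔
      HasDerivAt f f' t ∧ HasDerivAt g g' t := by
  simp only [hasDerivAt_iff_forall_apply, Sum.forall, fromRows_apply_inl, fromRows_apply_inr]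

theorem _root_.HasDerivAt.matrix_mul_const [NontriviallyNormedField 𝕜] [NormedRing K]
    [NormedAlgebra 𝕜 K] {f : 𝕜 → Matrix l m K} {f' : Matrix l m K} {t : 𝕜}
    (hf : HasDerivAt f f' t) (B : Matrix m n K) :
    HasDerivAt (fun s => f s * B) (f' * B) t := by
  rw [hasDerivAt_iff_forall_apply] at hf ⊢
  intro i j
  simp only [mul_apply]
  exact HasDerivAt.fun_sum fun k _ => (hf i k).mul_const (B k j)

theorem hasDerivAt_mul_inv_of_linear [NontriviallyNormedField 𝕜] [NormedField K] [CompleteSpace K]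
    [NormedAlgebra 𝕜 K] [DecidableEq n] {Q P : 𝕜 → Matrix n n K} {a b c d : Matrix n n K} {t : 𝕜}
    (hQ : HasDerivAt Q (-a * Q t + b * P t) t) (hP : HasDerivAt P (c * Q t + d * P t) t)
    (ht : IsUnit (Q t).det) :
    HasDerivAt (fun s => P s * (Q s)⁻¹)
      (-(P t * (Q t)⁻¹ * b * (P t * (Q t)⁻¹)) + P t * (Q t)⁻¹ * a + d * (P t * (Q t)⁻¹) + c) t := by
  have : @CompleteSpace (Matrix n n K) PseudoMetricSpace.toUniformSpace :=
    Matrix.instCompleteSpace _ _ _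
  simp only [nonsing_inv_eq_ringInverse]
  exact hQ.mul_ringInverse_of_linear hP ((isUnit_iff_isUnit_det _).2 ht)

variable [RCLike 𝕜] [DecidableEq l] [DecidableEq m]

theorem hasDerivAt_exp_smul_mul (M : Matrix m m 𝕜) (B : Matrix m n 𝕜) (t : ℝ) :
    HasDerivAt (fun s : ℝ => NormedSpace.exp ((s : 𝕜) • M) * B)
      (M * (NormedSpace.exp ((t : 𝕜) • M) * B)) t := by
  simp only [← RCLike.real_smul_eq_coe_smul (K := 𝕜), ← Matrix.mul_assoc]
  exact (hasDerivAt_exp_smul_const' M t).matrix_mul_const B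

theorem hasDerivAt_of_fromRows_eq_exp_smul_mul {Q : ℝ → Matrix l n 𝕜} {P : ℝ → Matrix m n 𝕜}
    {A₁₁ : Matrix l l 𝕜} {A₁₂ : Matrix l m 𝕜} {A₂₁ : Matrix m l 𝕜} {A₂₂ : Matrix m m 𝕜}
    {B : Matrix (l ⊕ m) n 𝕜}
    (hY : ∀ s : ℝ, fromRows (Q s) (P s) = NormedSpace.exp ((s : 𝕜) • fromBlocks A₁₁ A₁₂ A₂₁ A₂₂) * B)
    (t : ℝ) :
    HasDerivAt Q (A₁₁ * Q t + A₁₂ * P t) t ∧ HasDerivAt P (A₂₁ * Q t + A₂₂ * P t) t := by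
  rw [← hasDerivAt_fromRows_iff, ← fromBlocks_mul_fromRows, hY t, funext hY]
  exact hasDerivAt_exp_smul_mul _ B t

end Matrix

theorem radon_lemma_backward_general {n : ℕ}
    (A S D : Matrix (Fin n) (Fin n) ℂ)
    (W₀ : Matrix (Fin n) (Fin n) ℂ)
    (Q P : ℝ → Matrix (Fin n) (Fin n) ℂ)
    (hQP : ∀ t : ℝ, Matrix.fromRows (Q t) (P t) =
      NormedSpace.exp ((t : ℂ) • Matrix.fromBlocks (-A) S D Aᴴ) * Matrix.fromRows 1 W₀)
    (I : Set ℝ)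
    (hQinv : ∀ t ∈ I, IsUnit (Q t).det) :
    P 0 * (Q 0)⁻¹ = W₀ ∧
    ∀ t ∈ I, ∀ i j, HasDerivAt (fun s => (P s * (Q s)⁻¹) i j)
      ((-(P t * (Q t)⁻¹ * S * (P t * (Q t)⁻¹)) + P t * (Q t)⁻¹ * A
        + Aᴴ * (P t * (Q t)⁻¹) + D) i j) t := by
  have hY₀ : Q 0 = 1 ∧ P 0 = W₀ := by
    have h := hQP 0
    rw [Complex.ofReal_zero, zero_smul, NormedSpace.exp_zero] at h
    -- the product in `hQP` elaborates with a `CStarMatrix` `HMul` instance, which `simp` misses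
    exact fromRows_inj (h.trans (Matrix.one_mul _))
  refine ⟨by simp [hY₀.1, hY₀.2], fun t ht => ?_⟩
  obtain ⟨hQ, hP⟩ := Matrix.hasDerivAt_of_fromRows_eq_exp_smul_mul hQP t
  exact hasDerivAt_iff_forall_apply.1 (hasDerivAt_mul_inv_of_linear hQ hP (hQinv t ht))

/-- Radon's Lemma, direction (ii): let `H̃ = [[−A, S], [D, Aᴴ]]` with `S, D` Hermitian, and let
`[Q t; P t] = exp(t H̃) [I; W₀]` with `W₀` Hermitian.  If `Q t` is invertible for all `t` in an
open interval `I` containing `0`, then `W t := P t (Q t)⁻¹` solves on `I` the Riccati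
differential equation `W' = −W S W + W A + Aᴴ W + D` with `W 0 = W₀`.
Derivatives of matrix-valued functions are taken entrywise. -/
theorem radon_lemma_backward {n : ℕ}
    (A S D : Matrix (Fin n) (Fin n) ℂ)
    (hS : S.IsHermitian) (hD : D.IsHermitian)
    (W₀ : Matrix (Fin n) (Fin n) ℂ) (hW₀ : W₀.IsHermitian)
    (Q P : ℝ → Matrix (Fin n) (Fin n) ℂ)
    (hQP : ∀ t : ℝ, Matrix.fromRows (Q t) (P t) =
      NormedSpace.exp ((t : ℂ) • Matrix.fromBlocks (-A) S D Aᴴ) * Matrix.fromRows 1 W₀)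
    (I : Set ℝ) (hI : IsOpen I) (hI' : I.OrdConnected) (h0I : (0 : ℝ) ∈ I)
    (hQinv : ∀ t ∈ I, IsUnit (Q t).det) :
    P 0 * (Q 0)⁻¹ = W₀ ∧
    ∀ t ∈ I, ∀ i j, HasDerivAt (fun s => (P s * (Q s)⁻¹) i j)
      ((-(P t * (Q t)⁻¹ * S * (P t * (Q t)⁻¹)) + P t * (Q t)⁻¹ * A
        + Aᴴ * (P t * (Q t)⁻¹) + D) i j) t :=
  radon_lemma_backward_general A S D W₀ Q P hQP I hQinv
end

section
/- For positive integers k₁ < k₂ ≤ 2k₁ with δ = k₂ − k₁, the (δ+1)×(δ+1) matrix F with entries F(i,j) = 1/(k₁ + j − i)!, i.e. F is the matrix [[1/k₁!, 1/(k₁+1)!, …, 1/k₂!],[1/(k₁−1)!, 1/k₁!, …, 1/(k₂−1)!], …, [1/(2k₁−k₂)!, …, 1/k₁!]], has determinant det F = (δ!·(δ−1)!···1!)/(k₂!·(k₂−1)!···k₁!). In particular F is invertible. -/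
open Matrix Finset

/-- The factorial Toeplitz matrix `F_{k₁}^{k₂}` of size `(δ+1)×(δ+1)`, `δ = k₂ − k₁`, with
(`0`-indexed) `(i,j)` entry `1/(k₁ + j − i)!`. -/
noncomputable def factorialToeplitz (k₁ k₂ : ℕ) :
    Matrix (Fin (k₂ - k₁ + 1)) (Fin (k₂ - k₁ + 1)) ℝ :=
  Matrix.of fun i j => (1 : ℝ) / (k₁ + (j : ℕ) - (i : ℕ)).factorial

/-- Theorem 5.2: for `0 < k₁ < k₂ ≤ 2k₁` and `δ = k₂ − k₁`,
`det F_{k₁}^{k₂} = (δ!·(δ−1)!···1!)/(k₂!·(k₂−1)!···k₁!)`; in particular `F_{k₁}^{k₂}` is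
invertible. -/
theorem det_factorialToeplitz {k₁ k₂ : ℕ} (h₀ : 0 < k₁) (h₁ : k₁ < k₂) (h₂ : k₂ ≤ 2 * k₁) :
    (factorialToeplitz k₁ k₂).det =
        (∏ m ∈ Finset.range (k₂ - k₁ + 1), (m.factorial : ℝ)) /
          (∏ m ∈ Finset.range (k₂ - k₁ + 1), ((k₁ + m).factorial : ℝ)) ∧
      IsUnit (factorialToeplitz k₁ k₂).det := by
  set d := k₂ - k₁ with hd
  have hdk : k₁ + d = k₂ := by omega
  have hd1 : d ≤ k₁ := by omega
  -- the descFactorial matrix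
  set G : Matrix (Fin (d + 1)) (Fin (d + 1)) ℝ :=
    Matrix.of fun i j => (((k₂ - (i : ℕ)).descFactorial (d - (j : ℕ)) : ℕ) : ℝ) with hG
  -- Step 1: factor out 1/(k₂-i)! from row i
  have hrow : factorialToeplitz k₁ k₂ =
      Matrix.of fun (i j : Fin (d + 1)) => (((k₂ - (i : ℕ)).factorial : ℝ))⁻¹ * G i j := by
    ext i j
    have hij : d - (j : ℕ) ≤ k₂ - (i : ℕ) := by
      have := i.isLt; have := j.isLt; omega
    have hsub : k₂ - (i : ℕ) - (d - (j : ℕ)) = k₁ + (j : ℕ) - (i : ℕ) := by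
      have := i.isLt; have := j.isLt; omega
    have hfac := Nat.factorial_mul_descFactorial hij
    rw [hsub] at hfac
    have hfacR : ((k₁ + (j : ℕ) - (i : ℕ)).factorial : ℝ) *
        (((k₂ - (i : ℕ)).descFactorial (d - (j : ℕ)) : ℕ) : ℝ) =
        ((k₂ - (i : ℕ)).factorial : ℝ) := by exact_mod_cast congrArg Nat.cast hfac
    have h1 : ((k₁ + (j : ℕ) - (i : ℕ)).factorial : ℝ) ≠ 0 :=
      Nat.cast_ne_zero.mpr (Nat.factorial_ne_zero _)
    have h2 : ((k₂ - (i : ℕ)).factorial : ℝ) ≠ 0 :=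
      Nat.cast_ne_zero.mpr (Nat.factorial_ne_zero _)
    simp only [factorialToeplitz, Matrix.of_apply, hG]
    field_simp
    linarith [hfacR]
  -- Step 2: det G equals det of the reversed matrix H
  set H : Matrix (Fin (d + 1)) (Fin (d + 1)) ℝ :=
    Matrix.of fun i j => (((k₁ + (i : ℕ)).descFactorial ((j : ℕ)) : ℕ) : ℝ) with hH
  have hGH : G.det = H.det := by
    rw [← Matrix.det_submatrix_equiv_self (Fin.revPerm) G]
    congr 1
    ext i j
    simp only [Matrix.submatrix_apply, hG, hH, Matrix.of_apply, Fin.revPerm_apply, Fin.val_rev]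
    have e1 : k₂ - (d + 1 - ((i : ℕ) + 1)) = k₁ + (i : ℕ) := by have := i.isLt; omega
    have e2 : d - (d + 1 - ((j : ℕ) + 1)) = (j : ℕ) := by have := j.isLt; omega
    rw [e1, e2]
  -- Step 3: H is the evaluation matrix of descPochhammer polynomials
  have hHdet : H.det = (Matrix.vandermonde fun i : Fin (d + 1) =>
      (((k₁ + (i : ℕ) : ℕ)) : ℝ)).det := by
    rw [Matrix.det_eval_matrixOfPolynomials_eq_det_vandermonde
      (fun i : Fin (d + 1) => (((k₁ + (i : ℕ) : ℕ)) : ℝ))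
      (fun j : Fin (d + 1) => descPochhammer ℝ (j : ℕ))
      (fun j => descPochhammer_natDegree ℝ (j : ℕ))
      (fun j => monic_descPochhammer ℝ (j : ℕ))]
    congr 1
    ext i j
    rw [hH]
    exact (descPochhammer_eval_eq_descFactorial ℝ _ _).symm
  -- Step 4: compute the Vandermonde determinant
  have hvdm : (Matrix.vandermonde fun i : Fin (d + 1) =>
      (((k₁ + (i : ℕ) : ℕ)) : ℝ)).det = ((Nat.superFactorial d : ℕ) : ℝ) := by
    have : (fun i : Fin (d + 1) => (((k₁ + (i : ℕ) : ℕ)) : ℝ)) =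
        fun i : Fin (d + 1) => ((i : ℕ) : ℝ) + (k₁ : ℝ) := by
      funext i; push_cast; ring
    rw [this, Matrix.det_vandermonde_add]
    exact Matrix.det_vandermonde_id_eq_superFactorial d
  have hsf : ((Nat.superFactorial d : ℕ) : ℝ) =
      ∏ m ∈ Finset.range (d + 1), (m.factorial : ℝ) := by
    rw [← Nat.prod_range_succ_factorial d]; push_cast; ring
  -- Step 5: the product of the row factors
  have hprod : (∏ i : Fin (d + 1), (((k₂ - (i : ℕ)).factorial : ℝ))⁻¹) =
      (∏ m ∈ Finset.range (d + 1), ((k₁ + m).factorial : ℝ))⁻¹ := by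
    rw [← Finset.prod_inv_distrib]
    rw [Fin.prod_univ_eq_prod_range (fun i => (((k₂ - i).factorial : ℝ))⁻¹) (d + 1)]
    rw [← Finset.prod_range_reflect (fun m => (((k₁ + m).factorial : ℝ))⁻¹) (d + 1)]
    apply Finset.prod_congr rfl
    intro i hi
    simp only [Finset.mem_range] at hi
    have e : k₁ + (d + 1 - 1 - i) = k₂ - i := by omega
    rw [e]
  -- assemble
  have hdet : (factorialToeplitz k₁ k₂).det =
      (∏ m ∈ Finset.range (d + 1), (m.factorial : ℝ)) /
        (∏ m ∈ Finset.range (d + 1), ((k₁ + m).factorial : ℝ)) := by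
    rw [hrow, Matrix.det_mul_column, hGH, hHdet, hvdm, hsf, hprod, div_eq_mul_inv, mul_comm]
  refine ⟨hdet, ?_⟩
  rw [hdet, isUnit_iff_ne_zero]
  have hnum : (0 : ℝ) < ∏ m ∈ Finset.range (d + 1), (m.factorial : ℝ) :=
    Finset.prod_pos fun m _ => by exact_mod_cast Nat.factorial_pos m
  have hden : (0 : ℝ) < ∏ m ∈ Finset.range (d + 1), ((k₁ + m).factorial : ℝ) :=
    Finset.prod_pos fun m _ => by exact_mod_cast Nat.factorial_pos _
  positivity
end

section
/- Fix n ∈ ℕ and a real t ≠ 0. Let Γ_{n+1}^{2n}(t) be the n×n Toeplitz matrix with (i,j) entry t^{n+1+j−i}/(n+1+j−i)!, let P_n be the antidiagonal sign matrix with P_n(i, n+1−i) = (−1)^{n+1−i}, let φ_n(t) = (t^n/n!, …, t)^⊤ and ψ_n(t) = (t, …, t^n/n!)^⊤. Then κ_n := ψ_n(t)^H P_n (Γ_{n+1}^{2n}(t) P_n)^{-1} φ_n(t) equals 0 if n is even and 2 if n is odd; in particular κ_n is independent of t. -/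
open Matrix

/-- The antidiagonal sign matrix `P_n`. -/
def Pmat (n : ℕ) : Matrix (Fin n) (Fin n) ℝ :=
  Matrix.of fun i j => if (i : ℕ) + (j : ℕ) = n - 1 then (-1 : ℝ) ^ ((j : ℕ) + 1) else 0

/-- The Toeplitz matrix `Γ_{n+1}^{2n}(t)` with `(i,j)` entry `t^{n+1+j−i}/(n+1+j−i)!`. -/
noncomputable def GammaMat' (n : ℕ) (t : ℝ) : Matrix (Fin n) (Fin n) ℝ :=
  Matrix.of fun i j =>
    t ^ (n + 1 + (j : ℕ) - (i : ℕ)) / (n + 1 + (j : ℕ) - (i : ℕ)).factorial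

/-- The vector `φ_n(t) = (t^n/n!, …, t)ᵀ`. -/
noncomputable def phiVec (n : ℕ) (t : ℝ) : Fin n → ℝ :=
  fun i => t ^ (n - (i : ℕ)) / (n - (i : ℕ)).factorial

/-- The vector `ψ_n(t) = (t, t²/2!, …, t^n/n!)ᵀ`. -/
noncomputable def psiVec (n : ℕ) (t : ℝ) : Fin n → ℝ :=
  fun i => t ^ ((i : ℕ) + 1) / ((i : ℕ) + 1).factorial

/-!
The matrix `Γ P` factors as `D₁ H D₂`, where `D₁, D₂` are invertible diagonal matrices (powers of
`t`, signs) and `H i j = 1 / (2n - i - j)!`; the same scalings turn `φ` into `D₁ x` and `ψᵀ P` into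
`xᵀ D₂` with `x i = 1 / (n - i)!`, so `κ = xᵀ H⁻¹ x` and `t` drops out. Since
`N! / (N - j)!` is the falling factorial `N^{(j)}`, `H` is a row-scaled Vandermonde matrix in the
basis of falling factorials, hence invertible. If `H c = x`, the polynomial
`p = X^{(n)} - ∑ⱼ cⱼ X^{(j)}` is monic of degree `n` with `p(N) = N! (1/(N - n)! - ∑ⱼ cⱼ/(N - j)!)`;
it vanishes at `N = n + 1, …, 2n`, so `p = (X - n - 1)^{(n)}`, and evaluating at `N = n` gives
`n! (1 - xᵀ c) = (-1)^{(n)} = (-1)ⁿ n!`, i.e. `κ = 1 - (-1)ⁿ`.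
-/

open Polynomial

section Bilinear

variable {ι R : Type*} [Fintype ι] [DecidableEq ι] [CommRing R]

theorem vecMul_dotProduct_inv_mul_mul_mulVec {D E : Matrix ι ι R} (hD : IsUnit D) (hE : IsUnit E)
    (H : Matrix ι ι R) (x y : ι → R) :
    (x ᵥ* E) ⬝ᵥ ((D * H * E)⁻¹ *ᵥ (D *ᵥ y)) = x ⬝ᵥ (H⁻¹ *ᵥ y) := by
  rw [isUnit_iff_isUnit_det] at hD hE
  rw [← dotProduct_mulVec, mulVec_mulVec, mulVec_mulVec, Matrix.mul_inv_rev, Matrix.mul_inv_rev,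
    ← mul_assoc, ← mul_assoc, mul_nonsing_inv _ hE, one_mul, mul_assoc, nonsing_inv_mul _ hD,
    mul_one]

end Bilinear

section FallingFactorial

variable {K : Type*} [Field K]

theorem descPochhammer_eval_natCast_of_le [CharZero K] {N k : ℕ} (h : k ≤ N) :
    (descPochhammer K k).eval (N : K) = N.factorial * ((N - k).factorial : K)⁻¹ := by
  rw [descPochhammer_eval_eq_descFactorial, ← Nat.factorial_mul_descFactorial h, Nat.cast_mul,
    mul_right_comm, mul_inv_cancel₀ (Nat.cast_ne_zero.mpr (Nat.factorial_ne_zero _)), one_mul]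

theorem descPochhammer_eval_neg_one (R : Type*) [Ring R] (n : ℕ) :
    (descPochhammer R n).eval (-1) = (-1) ^ n * n.factorial := by
  have h := ascPochhammer_eval_neg_eq_descPochhammer R (-1) n
  rw [neg_neg, ascPochhammer_eval_one] at h
  rw [h, ← mul_assoc, ← pow_add, ← two_mul, pow_mul, neg_one_sq, one_pow, one_mul]

theorem degree_sum_smul_descPochhammer_lt {n : ℕ} (c : Fin n → K) :
    (∑ j : Fin n, c j • descPochhammer K j).degree < n := by
  rw [← mem_degreeLT]
  refine Submodule.sum_mem _ fun j _ => Submodule.smul_mem _ _ ?_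
  rw [mem_degreeLT, degree_eq_natDegree (monic_descPochhammer K j).ne_zero,
    descPochhammer_natDegree]
  exact_mod_cast j.isLt

theorem eval_descPochhammer_sub_sum_smul [CharZero K] {n N : ℕ} (c : Fin n → K) (hN : n ≤ N) :
    (descPochhammer K n - ∑ j : Fin n, c j • descPochhammer K j).eval (N : K) =
      N.factorial * (((N - n).factorial : K)⁻¹ - ∑ j : Fin n, ((N - j).factorial : K)⁻¹ * c j) := by
  simp only [eval_sub, eval_finsetSum, eval_smul, smul_eq_mul, mul_sub, Finset.mul_sum,
    descPochhammer_eval_natCast_of_le hN]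
  congr 1
  refine Finset.sum_congr rfl fun j _ => ?_
  rw [descPochhammer_eval_natCast_of_le (by omega)]
  ring

end FallingFactorial

noncomputable def invFactorialHankel (a n : ℕ) : Matrix (Fin n) (Fin n) ℝ :=
  of fun i j => ((a - (i + j) : ℕ).factorial : ℝ)⁻¹

noncomputable def invFactorialVec (n : ℕ) : Fin n → ℝ :=
  fun i => ((n - i : ℕ).factorial : ℝ)⁻¹

theorem invFactorialHankel_eq_diagonal_mul (a n : ℕ) (h : 2 * n ≤ a + 2) :
    invFactorialHankel a n = diagonal (fun i : Fin n => ((a - i : ℕ).factorial : ℝ)⁻¹) *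
      of fun i j : Fin n => (descPochhammer ℝ j).eval ((a - i : ℕ) : ℝ) := by
  ext i j
  rw [diagonal_mul, of_apply, descPochhammer_eval_natCast_of_le (by omega),
    inv_mul_cancel_left₀ (by positivity), invFactorialHankel, of_apply, Nat.sub_sub]

theorem det_invFactorialHankel_ne_zero (a n : ℕ) (h : 2 * n ≤ a + 2) :
    (invFactorialHankel a n).det ≠ 0 := by
  have hvandermonde :
      (of fun i j : Fin n => (descPochhammer ℝ j).eval ((a - i : ℕ) : ℝ)).det ≠ 0 := by
    rw [← det_eval_matrixOfPolynomials_eq_det_vandermonde _ _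
      (fun j => descPochhammer_natDegree ℝ j) (fun j => monic_descPochhammer ℝ j),
      det_vandermonde_ne_zero_iff]
    intro i j hij
    have := Nat.cast_injective hij
    omega
  rw [invFactorialHankel_eq_diagonal_mul a n h, det_mul, det_diagonal]
  exact mul_ne_zero (Finset.prod_ne_zero_iff.mpr fun i _ => by positivity) hvandermonde

theorem invFactorialVec_dotProduct_of_mulVec_eq {n : ℕ} {c : Fin n → ℝ}
    (hc : invFactorialHankel (2 * n) n *ᵥ c = invFactorialVec n) :
    invFactorialVec n ⬝ᵥ c = 1 - (-1) ^ n := by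
  set p : ℝ[X] := descPochhammer ℝ n - ∑ j, c j • descPochhammer ℝ j
  set q : ℝ[X] := (descPochhammer ℝ n).comp (X - C ((n + 1 : ℕ) : ℝ))
  have hdesc : (descPochhammer ℝ n).degree = n := by
    rw [degree_eq_natDegree (monic_descPochhammer ℝ n).ne_zero, descPochhammer_natDegree]
  have hlower := hdesc ▸ degree_sum_smul_descPochhammer_lt c
  have hp_monic : p.Monic := (monic_descPochhammer ℝ n).sub_of_left hlower
  have hp_deg : p.degree = n := (degree_sub_eq_left_of_degree_lt hlower).trans hdesc
  have hq_monic : q.Monic :=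
    (monic_descPochhammer ℝ n).comp (monic_X_sub_C _) (by rw [natDegree_X_sub_C]; exact one_ne_zero)
  have hq_deg : q.degree = n := by
    rw [degree_eq_natDegree hq_monic.ne_zero, natDegree_comp, natDegree_X_sub_C,
      descPochhammer_natDegree, mul_one]
  have hpq : p = q := by
    refine eq_of_degree_le_of_eval_index_eq (v := fun i : Fin n => ((2 * n - i : ℕ) : ℝ))
      Finset.univ ?_ ?_ (hp_deg.trans hq_deg.symm) ?_ ?_
    · intro i _ j _ hij
      have := Nat.cast_injective hij
      omega
    · rw [hp_deg, Finset.card_univ, Fintype.card_fin]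
    · rw [hp_monic.leadingCoeff, hq_monic.leadingCoeff]
    · intro i _
      have hrow := congrFun hc i
      simp only [mulVec, dotProduct, invFactorialHankel, invFactorialVec, of_apply] at hrow
      rw [eval_descPochhammer_sub_sum_smul c (by omega), show 2 * n - i - n = n - i by omega]
      simp only [Nat.sub_sub, hrow, sub_self, mul_zero, q, eval_comp, eval_sub, eval_X, eval_C]
      rw [← Nat.cast_sub (by omega), descPochhammer_eval_coe_nat_of_lt (by omega)]
  have h_at_n : p.eval (n : ℝ) = _ := eval_descPochhammer_sub_sum_smul c (le_refl n)
  rw [hpq] at h_at_n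
  simp only [q, eval_comp, eval_sub, eval_X, eval_C, Nat.sub_self, Nat.factorial_zero,
    Nat.cast_one, inv_one, show (n : ℝ) - ((n + 1 : ℕ) : ℝ) = -1 by push_cast; ring,
    descPochhammer_eval_neg_one, mul_comm ((-1 : ℝ) ^ n)] at h_at_n
  have h := mul_left_cancel₀ (by positivity) h_at_n.symm
  simp only [dotProduct, invFactorialVec]
  linarith

theorem Pmat_apply (n : ℕ) (i j : Fin n) :
    Pmat n i j = if i = j.rev then (-1 : ℝ) ^ ((j : ℕ) + 1) else 0 := by
  simp only [Pmat, of_apply, Fin.ext_iff, Fin.val_rev]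
  congr 1
  exact propext (by omega)

theorem mul_Pmat_apply {m : Type*} {n : ℕ} (M : Matrix m (Fin n) ℝ) (i : m) (j : Fin n) :
    (M * Pmat n) i j = M i j.rev * (-1 : ℝ) ^ ((j : ℕ) + 1) := by
  simp [mul_apply, Pmat_apply]

theorem vecMul_Pmat_apply {n : ℕ} (v : Fin n → ℝ) (j : Fin n) :
    (v ᵥ* Pmat n) j = v j.rev * (-1 : ℝ) ^ ((j : ℕ) + 1) := by
  simp [vecMul, dotProduct, Pmat_apply]

section Factorization

variable (n : ℕ) (t : ℝ)

theorem GammaMat'_mul_Pmat :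
    GammaMat' n t * Pmat n =
      diagonal (fun i : Fin n => t ^ (n - i)) * invFactorialHankel (2 * n) n *
        diagonal (fun j : Fin n => (-1) ^ ((j : ℕ) + 1) * t ^ (n - j)) := by
  ext i j
  rw [mul_Pmat_apply, mul_diagonal, diagonal_mul]
  have hexp : n + 1 + (j.rev : ℕ) - i = 2 * n - (i + j) := by rw [Fin.val_rev]; omega
  simp only [GammaMat', invFactorialHankel, of_apply, hexp,
    show 2 * n - (i + j) = (n - i) + (n - j) by omega, pow_add]
  ring

theorem vecMul_psiVec_Pmat :
    psiVec n t ᵥ* Pmat n =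
      invFactorialVec n ᵥ* diagonal (fun j : Fin n => (-1) ^ ((j : ℕ) + 1) * t ^ (n - j)) := by
  ext j
  rw [vecMul_Pmat_apply, vecMul_diagonal]
  simp only [psiVec, invFactorialVec, Fin.val_rev, show n - (j + 1) + 1 = n - j by omega]
  ring

theorem phiVec_eq_diagonal_mulVec :
    phiVec n t = diagonal (fun i : Fin n => t ^ (n - i)) *ᵥ invFactorialVec n := by
  ext i
  rw [mulVec_diagonal]
  simp only [phiVec, invFactorialVec]
  ring

end Factorization

/-- Theorem 5.3: `κ_n = ψ_nᴴ P_n (Γ_{n+1}^{2n} P_n)⁻¹ φ_n` equals `0` if `n` is even and `2`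
if `n` is odd; in particular it is independent of `t ≠ 0`. -/
theorem kappa_value {n : ℕ} (t : ℝ) (ht : t ≠ 0) :
    Matrix.vecMul (psiVec n t) (Pmat n) ⬝ᵥ
        ((GammaMat' n t * Pmat n)⁻¹).mulVec (phiVec n t) =
      if Even n then 0 else 2 := by
  have hunit {d : Fin n → ℝ} (hd : ∀ i, d i ≠ 0) : IsUnit (diagonal d) :=
    isUnit_diagonal.mpr (Pi.isUnit_iff.mpr fun i => (hd i).isUnit)
  have hH : IsUnit (invFactorialHankel (2 * n) n).det :=
    (det_invFactorialHankel_ne_zero _ _ (Nat.le_add_right _ _)).isUnit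
  have hsolve : invFactorialHankel (2 * n) n *ᵥ ((invFactorialHankel (2 * n) n)⁻¹ *ᵥ
      invFactorialVec n) = invFactorialVec n := by
    rw [mulVec_mulVec, mul_nonsing_inv _ hH, one_mulVec]
  rw [GammaMat'_mul_Pmat, vecMul_psiVec_Pmat, phiVec_eq_diagonal_mulVec,
    vecMul_dotProduct_inv_mul_mul_mulVec (hunit fun i => pow_ne_zero _ ht)
      (hunit fun j => mul_ne_zero (pow_ne_zero _ (neg_ne_zero.mpr one_ne_zero)) (pow_ne_zero _ ht)),
    invFactorialVec_dotProduct_of_mulVec_eq hsolve]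
  rcases Nat.even_or_odd n with hn | hn
  · rw [if_pos hn, hn.neg_one_pow, sub_self]
  · rw [if_neg (Nat.not_even_iff_odd.mpr hn), hn.neg_one_pow]
    norm_num
end
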